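/- There exists a constant C > 0 such that g(a,b) ≤ C Ψ(b) for all a, b > 0, where g(a,b) = ∫_{ℝ^{d−1}} Ψ((|ũ − (1/a)ẽ₁| + 1)² b) / ( (|ũ| + 1)^{d+α} (|ũ − (1/a)ẽ₁| + 1)^{d+α} ) dũ. -/
import Mathlib


open MeasureTheory

/-- The function `g(a,b) = Υ(a,b,1)` of Section 10, in dimension `d = n + 2` (integral over
`ℝ^{d-1} = ℝ^{n+1}`, with `ẽ₁` the first standard unit vector). -/
noncomputable def gker (n : ℕ) (α : ℝ) (Ψ : ℝ → ℝ) (a b : ℝ) : ℝ :=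
  ∫ u : EuclideanSpace ℝ (Fin (n + 1)),
    Ψ ((‖u - (1 / a) • EuclideanSpace.single (0 : Fin (n + 1)) (1 : ℝ)‖ + 1) ^ 2 * b) /
      ((‖u‖ + 1) ^ ((n : ℝ) + 2 + α) *
        (‖u - (1 / a) • EuclideanSpace.single (0 : Fin (n + 1)) (1 : ℝ)‖ + 1) ^
          ((n : ℝ) + 2 + α))

/-- Pointwise scaling bound: `Ψ(s² b) ≤ (C₂ ⊔ 1) s^(2 (γ₂ ⊔ 0)) Ψ(b)` for `s ≥ 1`, `b > 0`. -/
lemma psi_step (γ₂ C₂ : ℝ) (Ψ : ℝ → ℝ) (hC₂ : 0 < C₂)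
    (hpos : ∀ t : ℝ, 0 ≤ t → 0 < Ψ t)
    (hflat : ∀ t : ℝ, 0 ≤ t → t < 2 → Ψ t = Ψ 2)
    (hscale : ∀ r R : ℝ, 2 ≤ r → r < R → Ψ R / Ψ r ≤ C₂ * (R / r) ^ γ₂)
    (s b : ℝ) (hs : 1 ≤ s) (hb : 0 < b) :
    Ψ (s ^ 2 * b) ≤ max C₂ 1 * s ^ (2 * max γ₂ 0) * Ψ b := by
  have hs0 : (0 : ℝ) < s := lt_of_lt_of_le one_pos hs
  have hs2 : (1 : ℝ) ≤ s ^ 2 := one_le_pow₀ hs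
  have ht0 : (0 : ℝ) < s ^ 2 * b := by positivity
  have hbt : b ≤ s ^ 2 * b := le_mul_of_one_le_left hb.le hs2
  have hΨb : 0 < Ψ b := hpos b hb.le
  have hγ' : (0 : ℝ) ≤ max γ₂ 0 := le_max_right _ _
  have hsγ : (1 : ℝ) ≤ s ^ (2 * max γ₂ 0) :=
    Real.one_le_rpow hs (by positivity)
  have hK : (1 : ℝ) ≤ max C₂ 1 := le_max_right _ _
  have triv : ∀ x, Ψ x ≤ Ψ b → Ψ x ≤ max C₂ 1 * s ^ (2 * max γ₂ 0) * Ψ b := by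
    intro x hx
    calc Ψ x ≤ Ψ b := hx
      _ = 1 * 1 * Ψ b := by ring
      _ ≤ max C₂ 1 * s ^ (2 * max γ₂ 0) * Ψ b := by
          apply mul_le_mul_of_nonneg_right _ hΨb.le
          exact mul_le_mul hK hsγ zero_le_one (le_trans zero_le_one hK)
  by_cases h2 : s ^ 2 * b < 2
  · exact triv _ (le_of_eq (by rw [hflat _ ht0.le h2, hflat b hb.le (lt_of_le_of_lt hbt h2)]))
  push_neg at h2
  obtain ⟨r, hr2, hrt, hΨr, hqle⟩ :
      ∃ r, 2 ≤ r ∧ r ≤ s ^ 2 * b ∧ Ψ r = Ψ b ∧ (s ^ 2 * b) / r ≤ s ^ 2 := by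
    by_cases hb2 : 2 ≤ b
    · refine ⟨b, hb2, hbt, rfl, ?_⟩
      rw [mul_div_assoc, div_self hb.ne']
      simp
    · push_neg at hb2
      refine ⟨2, le_refl _, h2, (hflat b hb.le hb2).symm, ?_⟩
      rw [div_le_iff₀ (by norm_num : (0:ℝ) < 2)]
      have : s ^ 2 * b ≤ s ^ 2 * 2 := by nlinarith
      linarith
  rcases eq_or_lt_of_le hrt with heq | hlt
  · exact triv _ (le_of_eq (by rw [← heq, hΨr]))
  · have hΨrpos : 0 < Ψ r := hpos r (by linarith)
    have hmain := hscale r (s ^ 2 * b) hr2 hlt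
    have hq1 : (1 : ℝ) ≤ (s ^ 2 * b) / r := (one_le_div (by linarith)).mpr hrt
    have hq0 : (0 : ℝ) ≤ (s ^ 2 * b) / r := by linarith
    have e1 : ((s ^ 2 * b) / r) ^ γ₂ ≤ ((s ^ 2 * b) / r) ^ max γ₂ 0 :=
      Real.rpow_le_rpow_of_exponent_le hq1 (le_max_left _ _)
    have e2 : ((s ^ 2 * b) / r) ^ max γ₂ 0 ≤ (s ^ 2) ^ max γ₂ 0 :=
      Real.rpow_le_rpow hq0 hqle hγ'
    have e3 : (s ^ 2 : ℝ) ^ max γ₂ 0 = s ^ (2 * max γ₂ 0) := by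
      rw [← Real.rpow_natCast s 2, ← Real.rpow_mul hs0.le]
      norm_num
    have hqpos : (0 : ℝ) < ((s ^ 2 * b) / r) ^ γ₂ := Real.rpow_pos_of_pos (by linarith) _
    have h1 : Ψ (s ^ 2 * b) ≤ C₂ * ((s ^ 2 * b) / r) ^ γ₂ * Ψ r := by
      rw [div_le_iff₀ hΨrpos] at hmain
      exact hmain
    calc Ψ (s ^ 2 * b) ≤ C₂ * ((s ^ 2 * b) / r) ^ γ₂ * Ψ b := by rw [← hΨr]; exact h1
      _ ≤ max C₂ 1 * s ^ (2 * max γ₂ 0) * Ψ b := by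
          apply mul_le_mul_of_nonneg_right _ hΨb.le
          apply mul_le_mul (le_max_left _ _) (by linarith) hqpos.le
          exact le_trans hC₂.le (le_max_left _ _)

/-- There is `C > 0` such that `g(a,b) ≤ C Ψ(b)` for all `a, b > 0`.
Here `d = n + 2 ≥ 2`. -/
theorem gker_upper_bound
    (n : ℕ) (α γ₁ γ₂ C₁ C₂ : ℝ) (Ψ : ℝ → ℝ)
    (hα : 0 < α) (hα2 : α < 2)
    (hγ : γ₁ ≤ γ₂) (hγ₂ : γ₂ < min 1 α)
    (hC₁ : 0 < C₁) (hC₂ : 0 < C₂)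
    (hmeas : Measurable Ψ)
    (hpos : ∀ t : ℝ, 0 ≤ t → 0 < Ψ t)
    (hflat : ∀ t : ℝ, 0 ≤ t → t < 2 → Ψ t = Ψ 2)
    (hscale : ∀ r R : ℝ, 2 ≤ r → r < R →
      C₁ * (R / r) ^ γ₁ ≤ Ψ R / Ψ r ∧ Ψ R / Ψ r ≤ C₂ * (R / r) ^ γ₂) :
    ∃ C : ℝ, 0 < C ∧ ∀ a b : ℝ, 0 < a → 0 < b → gker n α Ψ a b ≤ C * Ψ b := by
  set p : ℝ := (n : ℝ) + 2 + α with hpdef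
  have hγ'lt : max γ₂ 0 < 1 := by
    have := lt_of_lt_of_le hγ₂ (min_le_left 1 α)
    exact max_lt this one_pos
  have hInt : Integrable
      (fun u : EuclideanSpace ℝ (Fin (n + 1)) => (1 + ‖u‖) ^ (-p)) := by
    apply integrable_one_add_norm
    rw [finrank_euclideanSpace_fin]
    push_cast
    simp only [hpdef]
    linarith
  set I : ℝ := ∫ u : EuclideanSpace ℝ (Fin (n + 1)), (1 + ‖u‖) ^ (-p) with hIdef
  have hIpos : 0 < I := by
    rw [hIdef, integral_pos_iff_support_of_nonneg _ hInt]
    · have : Function.support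
          (fun u : EuclideanSpace ℝ (Fin (n + 1)) => (1 + ‖u‖) ^ (-p)) = Set.univ := by
        ext u
        simp only [Function.mem_support, Set.mem_univ, iff_true]
        exact (Real.rpow_pos_of_pos (by positivity) _).ne'
      rw [this]
      exact isOpen_univ.measure_pos volume Set.univ_nonempty
    · intro u
      positivity
  refine ⟨max C₂ 1 * I, by positivity, ?_⟩
  intro a b ha hb
  have hΨb : 0 < Ψ b := hpos b hb.le
  have key : gker n α Ψ a b ≤
      ∫ u : EuclideanSpace ℝ (Fin (n + 1)), (max C₂ 1 * Ψ b) * (1 + ‖u‖) ^ (-p) := by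
    unfold gker
    apply integral_mono_of_nonneg
    · filter_upwards with u
      have h1 : (0 : ℝ) ≤ Ψ ((‖u - (1 / a) • EuclideanSpace.single (0 : Fin (n + 1)) (1 : ℝ)‖
          + 1) ^ 2 * b) := (hpos _ (by positivity)).le
      have h2 : (0 : ℝ) < (‖u‖ + 1) ^ p *
          (‖u - (1 / a) • EuclideanSpace.single (0 : Fin (n + 1)) (1 : ℝ)‖ + 1) ^ p := by
        apply mul_pos <;> exact Real.rpow_pos_of_pos (by positivity) _
      exact div_nonneg h1 h2.le
    · exact hInt.const_mul _
    · filter_upwards with u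
      set v := u - (1 / a) • EuclideanSpace.single (0 : Fin (n + 1)) (1 : ℝ) with hv
      set s := ‖v‖ + 1 with hsdef
      have hs : (1 : ℝ) ≤ s := le_add_of_nonneg_left (norm_nonneg v)
      have hs0 : (0 : ℝ) < s := lt_of_lt_of_le one_pos hs
      have hA : (0 : ℝ) < (‖u‖ + 1) ^ p := Real.rpow_pos_of_pos (by positivity) _
      have hS : (0 : ℝ) < s ^ p := Real.rpow_pos_of_pos hs0 _
      have hΨle := psi_step γ₂ C₂ Ψ hC₂ hpos hflat
        (fun r R h1 h2 => (hscale r R h1 h2).2) s b hs hb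
      have hexp : s ^ (2 * max γ₂ 0) ≤ s ^ p :=
        Real.rpow_le_rpow_of_exponent_le hs (by
          have hn : (0:ℝ) ≤ (n:ℝ) := Nat.cast_nonneg n
          simp only [hpdef]; linarith)
      rw [div_le_iff₀ (mul_pos hA hS)]
      have hinv : (1 + ‖u‖) ^ (-p) * (‖u‖ + 1) ^ p = 1 := by
        rw [add_comm (1 : ℝ) ‖u‖, Real.rpow_neg (by positivity)]
        exact inv_mul_cancel₀ hA.ne'
      calc Ψ (s ^ 2 * b) ≤ max C₂ 1 * s ^ (2 * max γ₂ 0) * Ψ b := hΨle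
        _ ≤ max C₂ 1 * s ^ p * Ψ b := by
            apply mul_le_mul_of_nonneg_right _ hΨb.le
            exact mul_le_mul_of_nonneg_left hexp (by positivity)
        _ = max C₂ 1 * Ψ b * (1 + ‖u‖) ^ (-p) * ((‖u‖ + 1) ^ p * s ^ p) := by
            rw [show max C₂ 1 * Ψ b * (1 + ‖u‖) ^ (-p) * ((‖u‖ + 1) ^ p * s ^ p)
                = max C₂ 1 * Ψ b * s ^ p * ((1 + ‖u‖) ^ (-p) * (‖u‖ + 1) ^ p) from by ring,
              hinv]
            ring
  calc gker n α Ψ a b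
      ≤ ∫ u : EuclideanSpace ℝ (Fin (n + 1)), (max C₂ 1 * Ψ b) * (1 + ‖u‖) ^ (-p) := key
    _ = (max C₂ 1 * Ψ b) * I := by rw [hIdef, integral_const_mul]
    _ = (max C₂ 1 * I) * Ψ b := by ring
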